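/- The matching relation with first-match and longest-match disambiguation is functional: if w ⊢ P ⇒ V and w ⊢ P ⇒ W then V = W. -/
import Mathlib


/-- Regular expression patterns over an alphabet `A`. -/
inductive Pat (A : Type) : Type
  | eps : Pat A
  | ch : A → Pat A
  | plus : Pat A → Pat A → Pat A
  | cat : Pat A → Pat A → Pat A
  | star : Pat A → Pat A

/-- The language of a pattern (the usual regular-expression language). -/
def Pat.lang {A : Type} : Pat A → Language A
  | .eps => 1
  | .ch a => {[a]}
  | .plus p q => p.lang + q.lang
  | .cat p q => p.lang * q.lang
  | .star p => KStar.kstar p.lang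

/-- Node addresses in the syntax tree of a pattern: `[]` is the root, `1 :: n`
addresses node `n` in the left child, `2 :: n` in the right child. -/
abbrev Node := List ℕ

/-- Bindable nodes: nodes of the syntax tree having no `*`-labeled ancestor
(the root is always bindable; below a `star` nothing is bindable). -/
def Pat.Bindable {A : Type} : Pat A → Node → Prop
  | _, [] => True
  | .plus p _, 1 :: n => p.Bindable n
  | .plus _ q, 2 :: n => q.Bindable n
  | .cat p _, 1 :: n => p.Bindable n
  | .cat _ q, 2 :: n => q.Bindable n
  | _, _ => False

/-- Associations: a map from node addresses to a matched subword (`some w`) or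
`⊥` (`none`). -/
abbrev Assoc (A : Type) := Node → Option (List A)

/-- The association `[λ → w]` binding only the root. -/
def single {A : Type} (w : List A) : Assoc A :=
  fun n => if n = [] then some w else none

/-- `V + P₂`: push the associations of `V` into the left branch of a
disjunction; all nodes of the right branch get `⊥`. -/
def orL {A : Type} (V : Assoc A) : Assoc A
  | [] => V []
  | 1 :: m => V m
  | _ => none

/-- `P₁ + V`: push the associations of `V` into the right branch of a
disjunction; all nodes of the left branch get `⊥`. -/
def orR {A : Type} (V : Assoc A) : Assoc A
  | [] => V []
  | 2 :: m => V m
  | _ => none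

/-- `V₁ · V₂`: the association for a concatenation node. -/
def catA {A : Type} (V₁ V₂ : Assoc A) : Assoc A
  | [] => match V₁ [], V₂ [] with
          | some u, some v => some (u ++ v)
          | _, _ => none
  | 1 :: m => V₁ m
  | 2 :: m => V₂ m
  | _ => none

mutual
/-- The matching relation `w ⊢ P ⇒ V` of the paper's Figure 2, with the
first-match policy for `+` (rules Or2/COr2) and the longest-match policy for
Kleene star in a concatenation (rule CKleene). -/
inductive Match {A : Type} : List A → Pat A → Assoc A → Prop
  | empty : Match [] .eps (single [])
  | lab (a : A) : Match [a] (.ch a) (single [a])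
  | kleeneEmpty (P : Pat A) : Match [] (.star P) (single [])
  | kleeneClosure {w₁ w₂ : List A} {P : Pat A} {V₁ V₂ : Assoc A} :
      Match w₁ P V₁ → Match w₂ (.star P) V₂ → w₁ ≠ [] →
      Match (w₁ ++ w₂) (.star P) (single (w₁ ++ w₂))
  | or1 {w : List A} {P₁ P₂ : Pat A} {V : Assoc A} :
      Match w P₁ V → Match w (.plus P₁ P₂) (orL V)
  | or2 {w : List A} {P₁ P₂ : Pat A} {V : Assoc A} :
      Match w P₂ V → w ∉ P₁.lang → Match w (.plus P₁ P₂) (orR V)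
  | celem {w₁ w₂ : List A} {P₁ P₂ : Pat A} {V₁ V₂ : Assoc A} :
      CMatch w₁ w₂ P₁ P₂ V₁ V₂ → Match (w₁ ++ w₂) (.cat P₁ P₂) (catA V₁ V₂)

/-- The auxiliary relation `(w₁, w₂) ⊢ P₁ · P₂ ⇒ (V₁, V₂)`: when matching
`w₁w₂` against `P₁ · P₂`, pattern `P₁` matches `w₁` yielding `V₁` and `P₂`
matches `w₂` yielding `V₂`. -/
inductive CMatch {A : Type} : List A → List A → Pat A → Pat A → Assoc A → Assoc A → Prop
  | cempty {w : List A} {P : Pat A} {V₂ : Assoc A} :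
      Match w P V₂ → CMatch [] w .eps P (single []) V₂
  | clab {a : A} {w : List A} {P : Pat A} {V₁ V₂ : Assoc A} :
      Match [a] (.ch a) V₁ → Match w P V₂ → CMatch [a] w (.ch a) P V₁ V₂
  | cor1 {w₁ w₂ : List A} {P₁ P₂ P₃ : Pat A} {V₁ V₂ : Assoc A} :
      CMatch w₁ w₂ P₁ P₃ V₁ V₂ →
      CMatch w₁ w₂ (.plus P₁ P₂) P₃ (orL V₁) V₂
  | cor2 {w₁ w₂ : List A} {P₁ P₂ P₃ : Pat A} {V₁ V₂ : Assoc A} :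
      CMatch w₁ w₂ P₂ P₃ V₁ V₂ → w₁ ++ w₂ ∉ (Pat.cat P₁ P₃).lang →
      CMatch w₁ w₂ (.plus P₁ P₂) P₃ (orR V₁) V₂
  | ccon {w₁ w₂ w₃ : List A} {P₁ P₂ P₃ : Pat A} {V₁ V₂ V₃ W : Assoc A} :
      CMatch w₁ (w₂ ++ w₃) P₁ (.cat P₂ P₃) V₁ W →
      CMatch w₂ w₃ P₂ P₃ V₂ V₃ →
      CMatch (w₁ ++ w₂) w₃ (.cat P₁ P₂) P₃ (catA V₁ V₂) V₃
  | ckleene {w₁ w₂ : List A} {P₁ P₂ : Pat A} {V₁ V₂ : Assoc A} :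
      Match w₁ (.star P₁) V₁ → Match w₂ P₂ V₂ →
      (¬ ∃ w₃ w₄, w₃ ≠ [] ∧ w₂ = w₃ ++ w₄ ∧
        w₁ ++ w₃ ∈ (Pat.star P₁).lang ∧ w₄ ∈ P₂.lang) →
      CMatch w₁ w₂ (.star P₁) P₂ V₁ V₂
end

/-- The type of node `n` of pattern `P` relative to a context language `C`:
all subwords that `n` can be associated with when matching a word of `C`
against `P`. -/
def typeOf {A : Type} (n : Node) (P : Pat A) (C : Set (List A)) : Set (List A) :=
  {w | ∃ w' ∈ C, ∃ V, Match w' P V ∧ V n = some w}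

/-- Size measure on patterns. -/
def psz {A : Type} : Pat A → ℕ
  | .eps => 1
  | .ch _ => 1
  | .plus p q => psz p + psz q + 1
  | .cat p q => 2 * psz p + psz q
  | .star p => psz p + 1

lemma psz_pos {A : Type} (P : Pat A) : 1 ≤ psz P := by
  induction P <;> simp only [psz] <;> omega

lemma kstar_append {A : Type} {l : Language A} {u v : List A}
    (hu : u ∈ l) (hv : v ∈ KStar.kstar l) : u ++ v ∈ KStar.kstar l := by
  rw [Language.mem_kstar] at hv ⊢
  obtain ⟨L, rfl, hL⟩ := hv
  refine ⟨u :: L, rfl, ?_⟩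
  intro y hy
  rcases List.mem_cons.1 hy with h | h
  · exact h ▸ hu
  · exact hL y h

lemma inv_eps {A : Type} {w : List A} {W : Assoc A} (h : Match w .eps W) :
    w = [] ∧ W = single [] := by
  cases h; exact ⟨rfl, rfl⟩

lemma inv_ch {A : Type} {a : A} {w : List A} {W : Assoc A} (h : Match w (.ch a) W) :
    w = [a] ∧ W = single [a] := by
  cases h; exact ⟨rfl, rfl⟩

lemma inv_star {A : Type} {P : Pat A} {w : List A} {W : Assoc A}
    (h : Match w (.star P) W) : W = single w := by
  cases h <;> rfl

lemma inv_plus {A : Type} {P₁ P₂ : Pat A} {w : List A} {W : Assoc A}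
    (h : Match w (.plus P₁ P₂) W) :
    (∃ V, Match w P₁ V ∧ W = orL V) ∨
    (∃ V, Match w P₂ V ∧ w ∉ P₁.lang ∧ W = orR V) := by
  cases h with
  | or1 h => exact Or.inl ⟨_, h, rfl⟩
  | or2 h hn => exact Or.inr ⟨_, h, hn, rfl⟩

lemma inv_cat {A : Type} {P₁ P₂ : Pat A} {w : List A} {W : Assoc A}
    (h : Match w (.cat P₁ P₂) W) :
    ∃ w₁ w₂ V₁ V₂, w = w₁ ++ w₂ ∧ CMatch w₁ w₂ P₁ P₂ V₁ V₂ ∧ W = catA V₁ V₂ := by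
  cases h with
  | celem h => exact ⟨_, _, _, _, rfl, h, rfl⟩

theorem main_aux {A : Type} : ∀ N : ℕ,
    (∀ (w : List A) (P : Pat A) (V : Assoc A), Match w P V →
       w.length + (2 * psz P + 1) ≤ N →
       w ∈ P.lang ∧ ∀ W, Match w P W → V = W) ∧
    (∀ (w₁ w₂ : List A) (P Q : Pat A) (V₁ V₂ : Assoc A), CMatch w₁ w₂ P Q V₁ V₂ →
       w₁.length + w₂.length + 2 * (2 * psz P + psz Q) ≤ N →
       w₁ ∈ P.lang ∧ w₂ ∈ Q.lang ∧
       ∀ w₁' w₂' W₁ W₂, CMatch w₁' w₂' P Q W₁ W₂ → w₁ ++ w₂ = w₁' ++ w₂' →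
         w₁ = w₁' ∧ w₂ = w₂' ∧ V₁ = W₁ ∧ V₂ = W₂) := by
  intro N
  induction N using Nat.strong_induction_on with
  | _ N IH =>
  have IH1 : ∀ M < N, ∀ (w : List A) (P : Pat A) (V : Assoc A), Match w P V →
      w.length + (2 * psz P + 1) ≤ M →
      w ∈ P.lang ∧ ∀ W, Match w P W → V = W := fun M hM => (IH M hM).1
  have IH2 : ∀ M < N, ∀ (w₁ w₂ : List A) (P Q : Pat A) (V₁ V₂ : Assoc A),
      CMatch w₁ w₂ P Q V₁ V₂ →
      w₁.length + w₂.length + 2 * (2 * psz P + psz Q) ≤ M →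
      w₁ ∈ P.lang ∧ w₂ ∈ Q.lang ∧
      ∀ w₁' w₂' W₁ W₂, CMatch w₁' w₂' P Q W₁ W₂ → w₁ ++ w₂ = w₁' ++ w₂' →
        w₁ = w₁' ∧ w₂ = w₂' ∧ V₁ = W₁ ∧ V₂ = W₂ := fun M hM => (IH M hM).2
  constructor
  · intro w P V h hle
    have hN : 1 ≤ N := le_trans (by omega) hle
    cases h with
    | empty =>
      exact ⟨Language.nil_mem_one, fun W hW => (inv_eps hW).2.symm⟩
    | lab a =>
      exact ⟨rfl, fun W hW => (inv_ch hW).2.symm⟩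
    | kleeneEmpty P =>
      exact ⟨Language.nil_mem_kstar _, fun W hW => (inv_star hW).symm⟩
    | @kleeneClosure w₁ w₂ P V₁ V₂ h1 h2 hne =>
      have hP := psz_pos P
      have hw₁ : 1 ≤ w₁.length := by
        cases w₁ with
        | nil => exact absurd rfl hne
        | cons a t => simp
      have m1 := IH1 (N - 1) (by omega) w₁ P V₁ h1
        (by simp only [List.length_append, psz] at hle ⊢; omega)
      have m2 := IH1 (N - 1) (by omega) w₂ (.star P) V₂ h2
        (by simp only [List.length_append, psz] at hle ⊢; omega)
      exact ⟨kstar_append m1.1 m2.1, fun W hW => (inv_star hW).symm⟩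
    | @or1 w P₁ P₂ V₀ h1 =>
      have hP₂ := psz_pos P₂
      have m1 := IH1 (N - 1) (by omega) w P₁ V₀ h1
        (by simp only [psz] at hle ⊢; omega)
      refine ⟨(Language.mem_add _ _ _).2 (Or.inl m1.1), ?_⟩
      intro W hW
      rcases inv_plus hW with ⟨V', h1', rfl⟩ | ⟨V', h1', hn, rfl⟩
      · rw [m1.2 _ h1']
      · exact absurd m1.1 hn
    | @or2 w P₁ P₂ V₀ h1 hn =>
      have hP₁ := psz_pos P₁
      have m1 := IH1 (N - 1) (by omega) w P₂ V₀ h1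
        (by simp only [psz] at hle ⊢; omega)
      refine ⟨(Language.mem_add _ _ _).2 (Or.inr m1.1), ?_⟩
      intro W hW
      rcases inv_plus hW with ⟨V', h1', rfl⟩ | ⟨V', h1', hn', rfl⟩
      · have m1' := IH1 (N - 1) (by omega) w P₁ _ h1'
          (by simp only [psz] at hle ⊢; omega)
        exact absurd m1'.1 hn
      · rw [m1.2 _ h1']
    | @celem w₁ w₂ P₁ P₂ V₁ V₂ h1 =>
      have m1 := IH2 (N - 1) (by omega) w₁ w₂ P₁ P₂ V₁ V₂ h1
        (by simp only [List.length_append, psz] at hle ⊢; omega)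
      refine ⟨Language.append_mem_mul m1.1 m1.2.1, ?_⟩
      intro W hW
      obtain ⟨w₁', w₂', W₁, W₂, heq, h1', rfl⟩ := inv_cat hW
      obtain ⟨e1, e2, e3, e4⟩ := m1.2.2 w₁' w₂' W₁ W₂ h1' heq
      rw [e3, e4]
  · intro w₁ w₂ P Q V₁ V₂ h hle
    have hN : 1 ≤ N := le_trans (by have := psz_pos P; have := psz_pos Q; omega) hle
    cases h with
    | cempty h1 =>
      have hQ := psz_pos Q
      have m1 := IH1 (N - 1) (by omega) w₂ Q V₂ h1
        (by simp only [psz] at hle ⊢; omega)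
      refine ⟨Language.nil_mem_one, m1.1, ?_⟩
      intro w₁' w₂' W₁ W₂ h' heq
      cases h' with
      | cempty h1' =>
        simp only [List.nil_append] at heq
        subst heq
        exact ⟨rfl, rfl, rfl, m1.2 _ h1'⟩
    | clab h0 h1 =>
      have hQ := psz_pos Q
      have m1 := IH1 (N - 1) (by omega) w₂ Q V₂ h1
        (by simp only [List.length_cons, List.length_nil, psz] at hle ⊢; omega)
      refine ⟨rfl, m1.1, ?_⟩
      intro w₁' w₂' W₁ W₂ h' heq
      cases h' with
      | clab h0' h1' =>
        simp only [List.cons_append, List.nil_append, List.cons.injEq, true_and] at heq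
        subst heq
        rw [(inv_ch h0).2, (inv_ch h0').2]
        exact ⟨rfl, rfl, rfl, m1.2 _ h1'⟩
    | cor1 h1 =>
      rename_i P₁ P₂ V₀
      have hP₂ := psz_pos P₂
      have m1 := IH2 (N - 1) (by omega) w₁ w₂ P₁ Q V₀ V₂ h1
        (by simp only [psz] at hle ⊢; omega)
      refine ⟨(Language.mem_add _ _ _).2 (Or.inl m1.1), m1.2.1, ?_⟩
      intro w₁' w₂' W₁ W₂ h' heq
      cases h' with
      | cor1 h1' =>
        obtain ⟨e1, e2, e3, e4⟩ := m1.2.2 _ _ _ _ h1' heq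
        exact ⟨e1, e2, by rw [e3], e4⟩
      | cor2 h1' hn =>
        refine absurd ?_ hn
        rw [← heq]
        exact Language.append_mem_mul m1.1 m1.2.1
    | cor2 h1 hn =>
      rename_i P₁ P₂ V₀
      have hP₁ := psz_pos P₁
      have m1 := IH2 (N - 1) (by omega) w₁ w₂ P₂ Q V₀ V₂ h1
        (by simp only [psz] at hle ⊢; omega)
      refine ⟨(Language.mem_add _ _ _).2 (Or.inr m1.1), m1.2.1, ?_⟩
      intro w₁' w₂' W₁ W₂ h' heq
      cases h' with
      | cor1 h1' =>
        have hlen : w₁'.length + w₂'.length = w₁.length + w₂.length := by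
          have := congrArg List.length heq
          simp only [List.length_append] at this
          omega
        have m1' := IH2 (N - 1) (by omega) _ _ P₁ Q _ _ h1'
          (by simp only [psz] at hle ⊢; omega)
        refine absurd ?_ hn
        rw [heq]
        exact Language.append_mem_mul m1'.1 m1'.2.1
      | cor2 h1' hn' =>
        obtain ⟨e1, e2, e3, e4⟩ := m1.2.2 _ _ _ _ h1' heq
        exact ⟨e1, e2, by rw [e3], e4⟩
    | ccon h1 h2 =>
      rename_i wa wb P₁ P₂ Va Vb W
      have hP₁ := psz_pos P₁
      have m1 := IH2 (N - 1) (by omega) wa (wb ++ w₂) P₁ (.cat P₂ Q) Va W h1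
        (by simp only [List.length_append, psz] at hle ⊢; omega)
      have m2 := IH2 (N - 1) (by omega) wb w₂ P₂ Q Vb V₂ h2
        (by simp only [List.length_append, psz] at hle ⊢; omega)
      refine ⟨Language.append_mem_mul m1.1 m2.1, m2.2.1, ?_⟩
      intro w₁' w₂' W₁ W₂ h' heq
      cases h' with
      | ccon h1' h2' =>
        rename_i wa' wb' Wa Wb W'
        have heq' : wa ++ (wb ++ w₂) = wa' ++ (wb' ++ w₂') := by
          simpa [List.append_assoc] using heq
        obtain ⟨e1, e2, e3, e4⟩ := m1.2.2 _ _ _ _ h1' heq'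
        obtain ⟨f1, f2, f3, f4⟩ := m2.2.2 _ _ _ _ h2' e2
        subst e1; subst f1; subst f2
        exact ⟨rfl, rfl, by rw [e3, f3], f4⟩
    | ckleene h1 h2 hn =>
      rename_i P₁
      have hP₁ := psz_pos P₁
      have hQ := psz_pos Q
      have m1 := IH1 (N - 1) (by omega) w₁ (.star P₁) V₁ h1
        (by simp only [psz] at hle ⊢; omega)
      have m2 := IH1 (N - 1) (by omega) w₂ Q V₂ h2
        (by simp only [psz] at hle ⊢; omega)
      refine ⟨m1.1, m2.1, ?_⟩
      intro w₁' w₂' W₁ W₂ h' heq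
      cases h' with
      | ckleene h1' h2' hn' =>
        have hlen' : w₁'.length + w₂'.length = w₁.length + w₂.length := by
          have := congrArg List.length heq
          simp only [List.length_append] at this
          omega
        have m1' := IH1 (N - 1) (by omega) w₁' (.star P₁) W₁ h1'
          (by simp only [psz] at hle ⊢; omega)
        have m2' := IH1 (N - 1) (by omega) w₂' Q W₂ h2'
          (by simp only [psz] at hle ⊢; omega)
        rcases List.append_eq_append_iff.1 heq with ⟨c, hc1, hc2⟩ | ⟨c, hc1, hc2⟩
        · rcases eq_or_ne c [] with rfl | hcne
          · simp only [List.append_nil] at hc1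
            simp only [List.nil_append] at hc2
            subst hc1; subst hc2
            exact ⟨rfl, rfl, m1.2 _ h1', m2.2 _ h2'⟩
          · exact absurd ⟨c, w₂', hcne, hc2, hc1 ▸ m1'.1, m2'.1⟩ hn
        · rcases eq_or_ne c [] with rfl | hcne
          · simp only [List.append_nil] at hc1
            simp only [List.nil_append] at hc2
            subst hc1; subst hc2
            exact ⟨rfl, rfl, m1.2 _ h1', m2.2 _ h2'⟩
          · exact absurd ⟨c, w₂, hcne, hc2, hc1 ▸ m1.1, m2.1⟩ hn'

/-- The matching relation is functional: matching a word against
a pattern yields a unique association. -/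
theorem match_unique {A : Type} {w : List A} {P : Pat A} {V W : Assoc A}
    (h₁ : Match w P V) (h₂ : Match w P W) : V = W :=
  ((main_aux (w.length + (2 * psz P + 1))).1 w P V h₁ le_rfl).2 W h₂
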